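/- arXiv:1508.01360 — 2 statements merged into one kernel-verified Lean document; each statement's English description precedes it below -/
import Mathlib

section
/- (Asymptotic density of D_2.) Let s_n be the number of codewords of the code D_2 of length at most n. If β is a real number satisfying β⁴ − 2β³ + β − 1 = 0 and 1.8 < β < 1.9 (numerically β ≈ 1.867), then lim_{n→∞} (s_n)^{1/n} = β. In particular, the number of D_2-codewords of length at most n grows like 1.867^n. -/
/-- suffix automaton state: longest suffix of `l` that is a proper prefix of `0110`. -/
def st (l : List Bool) : ℕ :=
  if [false, true, true] <:+ l then 3
  else if [false, true] <:+ l then 2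
  else if [false] <:+ l then 1 else 0

def good (l : List Bool) : Prop :=
  ¬ ([true, true, false] <+: l) ∧ ¬ ([false, true, true, false] <:+: l)

instance : DecidablePred good := fun l => by unfold good; infer_instance

/-- Finset of all binary words of length n. -/
def W : ℕ → Finset (List Bool)
  | 0 => {[]}
  | n + 1 => ((W n).image (· ++ [false])) ∪ ((W n).image (· ++ [true]))

lemma mem_W {n : ℕ} {l : List Bool} : l ∈ W n ↔ l.length = n := by
  induction n generalizing l with
  | zero => simp [W, List.length_eq_zero_iff]
  | succ n ih =>
    simp only [W, Finset.mem_union, Finset.mem_image]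
    constructor
    · rintro (⟨a, ha, rfl⟩ | ⟨a, ha, rfl⟩) <;> simp [ih.1 ha]
    · intro hl
      rcases List.eq_nil_or_concat l with rfl | ⟨L, b, rfl⟩
      · simp at hl
      · simp only [List.concat_eq_append, List.length_append, List.length_singleton] at hl
        have hL : L ∈ W n := ih.2 (by omega)
        cases b
        · exact Or.inl ⟨L, hL, by simp⟩
        · exact Or.inr ⟨L, hL, by simp⟩

lemma concat_suffix_concat {x l : List Bool} {c b : Bool} :
    x ++ [c] <:+ l ++ [b] ↔ c = b ∧ x <:+ l := by
  constructor
  · rintro ⟨s, hs⟩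
    rw [← List.append_assoc] at hs
    obtain ⟨h1, h2⟩ := List.append_inj' hs (by simp)
    simp at h2
    exact ⟨h2, s, h1⟩
  · rintro ⟨rfl, s, rfl⟩
    exact ⟨s, by simp⟩

lemma not_single_suffix_concat_ne {x : List Bool} {c b : Bool} (h : c ≠ b) :
    ¬ (x ++ [c] <:+ l ++ [b]) := fun hs => h (concat_suffix_concat.1 hs).1

lemma suffix_of_suffix_le {x y l : List Bool} (hx : x <:+ l) (hy : y <:+ l)
    (h : x.length ≤ y.length) : x <:+ y := by
  rw [← List.reverse_prefix] at hx hy ⊢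
  exact List.prefix_of_prefix_length_le hx hy (by simpa using h)

lemma st_concat_false {l : List Bool} : st (l ++ [false]) = 1 := by
  have h3 : ¬ ([false, true, true] <:+ l ++ [false]) := by
    have := @not_single_suffix_concat_ne l [false, true] true false (by simp)
    simpa using this
  have h2 : ¬ ([false, true] <:+ l ++ [false]) := by
    have := @not_single_suffix_concat_ne l [false] true false (by simp)
    simpa using this
  have h1 : [false] <:+ l ++ [false] := ⟨l, rfl⟩
  simp [st, h3, h2, h1]

lemma st_concat_true {l : List Bool} :
    st (l ++ [true]) = if st l = 2 then 3 else if st l = 1 then 2 else 0 := by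
  have e3 : ([false, true, true] <:+ l ++ [true]) ↔ [false, true] <:+ l := by
    have := @concat_suffix_concat [false, true] l true true
    simpa using this
  have e2 : ([false, true] <:+ l ++ [true]) ↔ [false] <:+ l := by
    have := @concat_suffix_concat [false] l true true
    simpa using this
  have e1 : ¬ ([false] <:+ l ++ [true]) := by
    have := @not_single_suffix_concat_ne l [] false true (by simp)
    simpa using this
  have hAB : ¬ ([false, true, true] <:+ l ∧ [false, true] <:+ l) := by
    rintro ⟨hA, hB⟩
    have := suffix_of_suffix_le hB hA (by simp)
    revert this; decide
  have hAC : ¬ ([false, true, true] <:+ l ∧ [false] <:+ l) := by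
    rintro ⟨hA, hC⟩
    have := suffix_of_suffix_le hC hA (by simp)
    revert this; decide
  have hBC : ¬ ([false, true] <:+ l ∧ [false] <:+ l) := by
    rintro ⟨hB, hC⟩
    have := suffix_of_suffix_le hC hB (by simp)
    revert this; decide
  by_cases hA : [false, true, true] <:+ l <;>
    by_cases hB : [false, true] <:+ l <;>
      by_cases hC : [false] <:+ l <;>
        simp_all [st]

lemma st_eq_three {l : List Bool} : st l = 3 ↔ [false, true, true] <:+ l := by
  unfold st; split_ifs <;> simp_all

lemma st_lt_four {l : List Bool} : st l < 4 := by
  unfold st; split_ifs <;> omega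

lemma infix_concat_iff {p l : List Bool} {b : Bool} :
    p <:+: (l ++ [b]) ↔ p <:+: l ∨ p <:+ (l ++ [b]) := by
  constructor
  · rintro ⟨s, t, h⟩
    rcases List.eq_nil_or_concat t with rfl | ⟨t', c, rfl⟩
    · exact Or.inr ⟨s, by simpa using h⟩
    · left
      simp only [List.concat_eq_append, ← List.append_assoc] at h
      obtain ⟨h1, -⟩ := List.append_inj' h (by simp)
      exact ⟨s, t', by simpa using h1⟩
  · rintro (h | h)
    · exact h.trans ⟨[], [b], by simp⟩
    · exact h.isInfix

lemma pat_suffix_concat_true {l : List Bool} :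
    ¬ ([false, true, true, false] <:+ l ++ [true]) := by
  have := @not_single_suffix_concat_ne l [false, true, true] false true (by simp)
  simpa using this

lemma pat_suffix_concat_false {l : List Bool} :
    ([false, true, true, false] <:+ l ++ [false]) ↔ st l = 3 := by
  rw [st_eq_three]
  have := @concat_suffix_concat [false, true, true] l false false
  simpa using this

lemma good_concat {l : List Bool} {b : Bool} (hl : 3 ≤ l.length) :
    good (l ++ [b]) ↔ good l ∧ ¬(b = false ∧ st l = 3) := by
  have hpre : ([true, true, false] <+: l ++ [b]) ↔ [true, true, false] <+: l := by
    constructor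
    · intro h
      exact List.prefix_of_prefix_length_le h ⟨[b], rfl⟩ (by simpa using hl)
    · intro h; exact h.trans ⟨[b], rfl⟩
  unfold good
  rw [hpre, infix_concat_iff]
  cases b
  · rw [pat_suffix_concat_false]; tauto
  · simp only [pat_suffix_concat_true, or_false]
    tauto

noncomputable def cnt (n q : ℕ) : ℕ :=
  ((W (n + 3)).filter (fun l => good l ∧ st l = q)).card

lemma card_filter_succ (n : ℕ) (p : List Bool → Prop) [DecidablePred p] :
    ((W (n + 1)).filter p).card =
      ((W n).filter (fun l => p (l ++ [false]))).card +
        ((W n).filter (fun l => p (l ++ [true]))).card := by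
  have hW : W (n + 1) = ((W n).image (· ++ [false])) ∪ ((W n).image (· ++ [true])) := rfl
  have hdisj : Disjoint (((W n).image (· ++ [false])).filter p)
      (((W n).image (· ++ [true])).filter p) := by
    rw [Finset.disjoint_left]
    intro a ha hb
    rw [Finset.mem_filter, Finset.mem_image] at ha hb
    obtain ⟨⟨x, -, hx⟩, -⟩ := ha
    obtain ⟨⟨y, -, hy⟩, -⟩ := hb
    rw [← hy] at hx
    obtain ⟨-, h2⟩ := List.append_inj' hx (by simp)
    simp at h2
  rw [hW, Finset.filter_union, Finset.card_union_of_disjoint hdisj,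
    Finset.filter_image, Finset.filter_image,
    Finset.card_image_of_injective _ (List.append_left_injective _),
    Finset.card_image_of_injective _ (List.append_left_injective _)]

lemma card_filter_st_or (n q q' : ℕ) (h : q ≠ q') :
    ((W (n + 3)).filter (fun l => good l ∧ (st l = q ∨ st l = q'))).card
      = cnt n q + cnt n q' := by
  simp only [and_or_left]
  rw [Finset.filter_or, Finset.card_union_of_disjoint]
  · rfl
  · rw [Finset.disjoint_left]
    intro a ha hb
    rw [Finset.mem_filter] at ha hb
    omega

lemma length_of_mem_W {n : ℕ} {l : List Bool} (hl : l ∈ W (n + 3)) : 3 ≤ l.length := by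
  rw [mem_W] at hl; omega

lemma disj_st {n q q' : ℕ} (h : q ≠ q') :
    Disjoint ((W (n + 3)).filter (fun l => good l ∧ st l = q))
      ((W (n + 3)).filter (fun l => good l ∧ st l = q')) := by
  rw [Finset.disjoint_left]
  intro a ha hb
  simp only [Finset.mem_filter] at ha hb
  omega

lemma cnt_succ_zero (n : ℕ) : cnt (n + 1) 0 = cnt n 0 + cnt n 3 := by
  have e0 : cnt (n + 1) 0 = ((W ((n + 3) + 1)).filter (fun l => good l ∧ st l = 0)).card := rfl
  rw [e0, card_filter_succ]
  have h1 : ((W (n + 3)).filter (fun l => good (l ++ [false]) ∧ st (l ++ [false]) = 0)).card = 0 := by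
    rw [Finset.card_eq_zero, Finset.filter_eq_empty_iff]
    intro l _
    rw [st_concat_false]
    simp
  have h2 : ((W (n + 3)).filter (fun l => good (l ++ [true]) ∧ st (l ++ [true]) = 0)).card
      = cnt n 0 + cnt n 3 := by
    have key : ((W (n + 3)).filter (fun l => good (l ++ [true]) ∧ st (l ++ [true]) = 0))
        = (W (n + 3)).filter (fun l => good l ∧ (st l = 0 ∨ st l = 3)) := by
      refine Finset.filter_congr (fun l hl => ?_)
      rw [good_concat (length_of_mem_W hl), st_concat_true]
      have := @st_lt_four l
      constructor
      · rintro ⟨⟨hg, -⟩, hst⟩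
        refine ⟨hg, ?_⟩
        split_ifs at hst <;> omega
      · rintro ⟨hg, hst⟩
        refine ⟨⟨hg, by simp⟩, ?_⟩
        split_ifs <;> omega
    rw [key, card_filter_st_or n 0 3 (by omega)]
  omega

lemma cnt_succ_two (n : ℕ) : cnt (n + 1) 2 = cnt n 1 := by
  have e0 : cnt (n + 1) 2 = ((W ((n + 3) + 1)).filter (fun l => good l ∧ st l = 2)).card := rfl
  rw [e0, card_filter_succ]
  have h1 : ((W (n + 3)).filter (fun l => good (l ++ [false]) ∧ st (l ++ [false]) = 2)).card = 0 := by
    rw [Finset.card_eq_zero, Finset.filter_eq_empty_iff]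
    intro l _
    rw [st_concat_false]
    simp
  have h2 : ((W (n + 3)).filter (fun l => good (l ++ [true]) ∧ st (l ++ [true]) = 2)).card
      = cnt n 1 := by
    have key : ((W (n + 3)).filter (fun l => good (l ++ [true]) ∧ st (l ++ [true]) = 2))
        = (W (n + 3)).filter (fun l => good l ∧ st l = 1) := by
      refine Finset.filter_congr (fun l hl => ?_)
      rw [good_concat (length_of_mem_W hl), st_concat_true]
      have := @st_lt_four l
      constructor
      · rintro ⟨⟨hg, -⟩, hst⟩
        refine ⟨hg, ?_⟩
        split_ifs at hst <;> omega
      · rintro ⟨hg, hst⟩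
        refine ⟨⟨hg, by simp⟩, ?_⟩
        split_ifs <;> omega
    rw [key]
    rfl
  omega

lemma cnt_succ_three (n : ℕ) : cnt (n + 1) 3 = cnt n 2 := by
  have e0 : cnt (n + 1) 3 = ((W ((n + 3) + 1)).filter (fun l => good l ∧ st l = 3)).card := rfl
  rw [e0, card_filter_succ]
  have h1 : ((W (n + 3)).filter (fun l => good (l ++ [false]) ∧ st (l ++ [false]) = 3)).card = 0 := by
    rw [Finset.card_eq_zero, Finset.filter_eq_empty_iff]
    intro l _
    rw [st_concat_false]
    simp
  have h2 : ((W (n + 3)).filter (fun l => good (l ++ [true]) ∧ st (l ++ [true]) = 3)).card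
      = cnt n 2 := by
    have key : ((W (n + 3)).filter (fun l => good (l ++ [true]) ∧ st (l ++ [true]) = 3))
        = (W (n + 3)).filter (fun l => good l ∧ st l = 2) := by
      refine Finset.filter_congr (fun l hl => ?_)
      rw [good_concat (length_of_mem_W hl), st_concat_true]
      have := @st_lt_four l
      constructor
      · rintro ⟨⟨hg, -⟩, hst⟩
        refine ⟨hg, ?_⟩
        split_ifs at hst <;> omega
      · rintro ⟨hg, hst⟩
        refine ⟨⟨hg, by simp⟩, ?_⟩
        split_ifs <;> omega
    rw [key]
    rfl
  omega

lemma cnt_succ_one (n : ℕ) : cnt (n + 1) 1 = cnt n 0 + cnt n 1 + cnt n 2 := by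
  have e0 : cnt (n + 1) 1 = ((W ((n + 3) + 1)).filter (fun l => good l ∧ st l = 1)).card := rfl
  rw [e0, card_filter_succ]
  have h2 : ((W (n + 3)).filter (fun l => good (l ++ [true]) ∧ st (l ++ [true]) = 1)).card = 0 := by
    rw [Finset.card_eq_zero, Finset.filter_eq_empty_iff]
    intro l _
    rw [st_concat_true]
    have := @st_lt_four l
    rintro ⟨-, hst⟩
    split_ifs at hst <;> omega
  have h1 : ((W (n + 3)).filter (fun l => good (l ++ [false]) ∧ st (l ++ [false]) = 1)).card
      = cnt n 0 + cnt n 1 + cnt n 2 := by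
    have key : ((W (n + 3)).filter (fun l => good (l ++ [false]) ∧ st (l ++ [false]) = 1))
        = (W (n + 3)).filter (fun l => good l ∧ (st l = 0 ∨ (st l = 1 ∨ st l = 2))) := by
      refine Finset.filter_congr (fun l hl => ?_)
      rw [good_concat (length_of_mem_W hl), st_concat_false]
      have := @st_lt_four l
      constructor
      · rintro ⟨⟨hg, h3⟩, -⟩
        have h3' : st l ≠ 3 := fun h => h3 ⟨rfl, h⟩
        exact ⟨hg, by omega⟩
      · rintro ⟨hg, hst⟩
        exact ⟨⟨hg, fun hc => by have := hc.2; omega⟩, rfl⟩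
    rw [key]
    simp only [and_or_left]
    rw [Finset.filter_or, Finset.filter_or, Finset.card_union_of_disjoint, Finset.card_union_of_disjoint (disj_st (by decide : (1:ℕ) ≠ 2))]
    · have ha : ((W (n + 3)).filter (fun l => good l ∧ st l = 0)).card = cnt n 0 := rfl
      have hb : ((W (n + 3)).filter (fun l => good l ∧ st l = 1)).card = cnt n 1 := rfl
      have hc : ((W (n + 3)).filter (fun l => good l ∧ st l = 2)).card = cnt n 2 := rfl
      omega
    · rw [Finset.disjoint_left]
      intro a ha hb
      simp only [Finset.mem_filter, Finset.mem_union] at ha hb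
      omega
  omega

lemma cnt_zero : cnt 0 0 = 1 ∧ cnt 0 1 = 3 ∧ cnt 0 2 = 2 ∧ cnt 0 3 = 1 := by
  refine ⟨?_, ?_, ?_, ?_⟩ <;> · show (Finset.filter _ (W 3)).card = _; decide

/-- The code `D₂`: the word `110` together with all binary words that do not begin
with `110`, end with the suffix `0110`, and contain `0110` only as that suffix. -/
def D2 : Set (List Bool) :=
  {w | w = [true, true, false] ∨
    (¬ [true, true, false] <+: w ∧
     [false, true, true, false] <:+ w ∧
     ∀ u v, w = u ++ [false, true, true, false] ++ v → v = [])}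

/-- `f2 n` is the number of codewords of `D₂` of length `n`. -/
noncomputable def f2 (n : ℕ) : ℕ := Set.ncard {w ∈ D2 | w.length = n}

/-- `s2 n` is the number of codewords of `D₂` of length at most `n`. -/
noncomputable def s2 (n : ℕ) : ℕ := ∑ i ∈ Finset.Icc 1 n, f2 i

lemma f2_eq (m : ℕ) : f2 (m + 4) = cnt m 3 := by
  have hset : {w ∈ D2 | w.length = m + 4}
      = ↑(((W (m + 3)).filter (fun l => good l ∧ st l = 3)).image (· ++ [false])) := by
    ext w
    simp only [Set.mem_setOf_eq, Finset.coe_image, Set.mem_image, Finset.mem_coe,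
      Finset.mem_filter]
    constructor
    · rintro ⟨hD, hlen⟩
      rcases hD with rfl | ⟨hpre, ⟨s, rfl⟩, huniq⟩
      · simp at hlen
      · refine ⟨s ++ [false, true, true], ⟨?_, ?_, ?_⟩, by simp⟩
        · rw [mem_W]
          simp only [List.length_append] at hlen ⊢
          simp at hlen ⊢
          omega
        · constructor
          · intro h
            exact hpre (h.trans ⟨[false], by simp⟩)
          · rintro ⟨x, y, hxy⟩
            have hw : s ++ [false, true, true, false]
                = x ++ [false, true, true, false] ++ (y ++ [false]) := by
              have hs : s ++ [false, true, true, false]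
                  = (s ++ [false, true, true]) ++ [false] := by simp
              rw [hs, ← hxy]
              simp
            have := huniq x (y ++ [false]) hw
            simp at this
        · rw [st_eq_three]
          exact ⟨s, by simp⟩
    · rintro ⟨l, ⟨hW, hg, hst⟩, rfl⟩
      rw [mem_W] at hW
      constructor
      · right
        refine ⟨?_, pat_suffix_concat_false.mpr hst, ?_⟩
        · intro h
          refine hg.1 (List.prefix_of_prefix_length_le h ⟨[false], rfl⟩ ?_)
          rw [hW]
          simp
        · intro u v h
          by_contra hv
          rcases List.eq_nil_or_concat v with rfl | ⟨v', c, rfl⟩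
          · exact hv rfl
          · simp only [List.concat_eq_append, ← List.append_assoc] at h
            obtain ⟨h1, -⟩ := List.append_inj' h (by simp)
            exact hg.2 ⟨u, v', by simp [h1]⟩
      · simp [hW]
  rw [f2, hset, Set.ncard_coe_finset,
    Finset.card_image_of_injective _ (List.append_left_injective _)]
  rfl

lemma pat_suffix_length {w : List Bool} (h : [false, true, true, false] <:+ w) :
    4 ≤ w.length := by simpa using h.length_le

lemma f2_small : f2 0 = 0 ∧ f2 1 = 0 ∧ f2 2 = 0 ∧ f2 3 = 1 := by
  have h012 : ∀ n, n < 3 → f2 n = 0 := by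
    intro n hn
    have hempty : {w ∈ D2 | w.length = n} = ∅ := by
      rw [Set.eq_empty_iff_forall_notMem]
      rintro w ⟨hD, hlen⟩
      rcases hD with rfl | ⟨-, hsuf, -⟩
      · simp at hlen; omega
      · have := pat_suffix_length hsuf
        omega
    rw [f2, hempty, Set.ncard_empty]
  have h3 : f2 3 = 1 := by
    have hsingle : {w ∈ D2 | w.length = 3} = {[true, true, false]} := by
      ext w
      simp only [Set.mem_setOf_eq, Set.mem_singleton_iff]
      constructor
      · rintro ⟨hD, hlen⟩
        rcases hD with rfl | ⟨-, hsuf, -⟩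
        · rfl
        · have := pat_suffix_length hsuf
          omega
      · rintro rfl
        exact ⟨Or.inl rfl, rfl⟩
    rw [f2, hsingle, Set.ncard_singleton]
  exact ⟨h012 0 (by omega), h012 1 (by omega), h012 2 (by omega), h3⟩

noncomputable def Lw (β : ℝ) (n : ℕ) : ℝ :=
  β * (cnt n 0 : ℝ) + β * (β - 1) * (cnt n 1 : ℝ)
    + β * (β - 1) ^ 2 * (cnt n 2 : ℝ) + (cnt n 3 : ℝ)

noncomputable def L0 (β : ℝ) : ℝ := β + 3 * (β * (β - 1)) + 2 * (β * (β - 1) ^ 2) + 1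

lemma Lw_zero (β : ℝ) : Lw β 0 = L0 β := by
  rw [Lw, cnt_zero.1, cnt_zero.2.1, cnt_zero.2.2.1, cnt_zero.2.2.2, L0]
  push_cast
  ring

lemma Lw_succ {β : ℝ} (hroot : β ^ 4 - 2 * β ^ 3 + β - 1 = 0) (n : ℕ) :
    Lw β (n + 1) = β * Lw β n := by
  rw [Lw, Lw, cnt_succ_zero, cnt_succ_one, cnt_succ_two, cnt_succ_three]
  push_cast
  linear_combination (-(cnt n 2 : ℝ)) * hroot

lemma Lw_eq {β : ℝ} (hroot : β ^ 4 - 2 * β ^ 3 + β - 1 = 0) (n : ℕ) :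
    Lw β n = L0 β * β ^ n := by
  induction n with
  | zero => simp [Lw_zero]
  | succ n ih => rw [Lw_succ hroot, ih, pow_succ]; ring

lemma L0_pos {β : ℝ} (h₁ : 1.8 < β) : 1 ≤ L0 β := by
  rw [L0]; nlinarith

lemma cnt3_le_Lw {β : ℝ} (h₁ : 1.8 < β) (n : ℕ) : (cnt n 3 : ℝ) ≤ Lw β n := by
  rw [Lw]
  have c0 : (0:ℝ) ≤ (cnt n 0 : ℝ) := Nat.cast_nonneg _
  have c1 : (0:ℝ) ≤ (cnt n 1 : ℝ) := Nat.cast_nonneg _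
  have c2 : (0:ℝ) ≤ (cnt n 2 : ℝ) := Nat.cast_nonneg _
  nlinarith [mul_nonneg (show (0:ℝ) ≤ β by nlinarith) c0,
    mul_nonneg (show (0:ℝ) ≤ β * (β - 1) by nlinarith) c1,
    mul_nonneg (show (0:ℝ) ≤ β * (β - 1) ^ 2 by nlinarith) c2]

lemma cnt_chain (m : ℕ) :
    cnt m 0 + cnt m 1 + cnt m 2 + cnt m 3 ≤ cnt (m + 4) 3 := by
  have h1 : cnt (m + 4) 3 = cnt (m + 3) 2 := cnt_succ_three (m + 3)
  have h2 : cnt (m + 3) 2 = cnt (m + 2) 1 := cnt_succ_two (m + 2)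
  have h3 : cnt (m + 2) 1 = cnt (m + 1) 0 + cnt (m + 1) 1 + cnt (m + 1) 2 :=
    cnt_succ_one (m + 1)
  have h4 : cnt (m + 1) 0 = cnt m 0 + cnt m 3 := cnt_succ_zero m
  have h5 : cnt (m + 1) 1 = cnt m 0 + cnt m 1 + cnt m 2 := cnt_succ_one m
  have h6 : cnt (m + 1) 2 = cnt m 1 := cnt_succ_two m
  omega

lemma Lw_le_cnt3 {β : ℝ} (h₁ : 1.8 < β) (h₂ : β < 1.9) (m : ℕ) :
    Lw β m ≤ β ^ 2 * (cnt (m + 4) 3 : ℝ) := by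
  have hsum : (cnt m 0 + cnt m 1 + cnt m 2 + cnt m 3 : ℝ) ≤ (cnt (m + 4) 3 : ℝ) := by
    exact_mod_cast cnt_chain m
  rw [Lw]
  have c0 : (0:ℝ) ≤ (cnt m 0 : ℝ) := Nat.cast_nonneg _
  have c1 : (0:ℝ) ≤ (cnt m 1 : ℝ) := Nat.cast_nonneg _
  have c2 : (0:ℝ) ≤ (cnt m 2 : ℝ) := Nat.cast_nonneg _
  have c3 : (0:ℝ) ≤ (cnt m 3 : ℝ) := Nat.cast_nonneg _
  have k0 : β * (cnt m 0 : ℝ) ≤ β ^ 2 * (cnt m 0 : ℝ) :=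
    mul_le_mul_of_nonneg_right (by nlinarith) c0
  have k1 : β * (β - 1) * (cnt m 1 : ℝ) ≤ β ^ 2 * (cnt m 1 : ℝ) :=
    mul_le_mul_of_nonneg_right (by nlinarith) c1
  have k2 : β * (β - 1) ^ 2 * (cnt m 2 : ℝ) ≤ β ^ 2 * (cnt m 2 : ℝ) :=
    mul_le_mul_of_nonneg_right (by nlinarith) c2
  have k3 : (cnt m 3 : ℝ) ≤ β ^ 2 * (cnt m 3 : ℝ) := by nlinarith
  have k4 : β ^ 2 * ((cnt m 0 : ℝ) + (cnt m 1 : ℝ) + (cnt m 2 : ℝ) + (cnt m 3 : ℝ))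
      ≤ β ^ 2 * (cnt (m + 4) 3 : ℝ) :=
    mul_le_mul_of_nonneg_left hsum (by positivity)
  nlinarith

lemma s2_succ (n : ℕ) : s2 (n + 1) = s2 n + f2 (n + 1) := by
  rw [s2, s2, Finset.sum_Icc_succ_top (by omega : 1 ≤ n + 1)]

lemma f2_ub {β : ℝ} (hroot : β ^ 4 - 2 * β ^ 3 + β - 1 = 0) (h₁ : 1.8 < β)
    (i : ℕ) (hi : 1 ≤ i) : (f2 i : ℝ) ≤ L0 β * β ^ i := by
  have hL0 := L0_pos h₁
  have hβ1 : (1:ℝ) ≤ β := by nlinarith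
  have hpow : (1:ℝ) ≤ β ^ i := one_le_pow₀ hβ1
  rcases Nat.lt_or_ge i 4 with h | h
  · have : f2 i ≤ 1 := by
      interval_cases i <;> simp [f2_small.1, f2_small.2.1, f2_small.2.2.1, f2_small.2.2.2]
    have : (f2 i : ℝ) ≤ 1 := by exact_mod_cast this
    nlinarith
  · obtain ⟨m, rfl⟩ : ∃ m, i = m + 4 := ⟨i - 4, by omega⟩
    have h1 : (f2 (m + 4) : ℝ) = (cnt m 3 : ℝ) := by rw [f2_eq m]
    have h2 := cnt3_le_Lw h₁ m
    rw [Lw_eq hroot] at h2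
    have h3 : L0 β * β ^ m ≤ L0 β * β ^ (m + 4) := by
      apply mul_le_mul_of_nonneg_left _ (by linarith)
      exact pow_le_pow_right₀ hβ1 (by omega)
    linarith [h1 ▸ h2]

lemma s2_ub {β : ℝ} (hroot : β ^ 4 - 2 * β ^ 3 + β - 1 = 0) (h₁ : 1.8 < β)
    (n : ℕ) : (s2 n : ℝ) ≤ 3 * L0 β * β ^ n := by
  have hL0 := L0_pos h₁
  induction n with
  | zero =>
    have : s2 0 = 0 := by simp [s2]
    rw [this]
    simp
    nlinarith
  | succ n ih =>
    rw [s2_succ]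
    push_cast
    have hf := f2_ub hroot h₁ (n + 1) (by omega)
    have hpow : (0:ℝ) ≤ β ^ n := by positivity
    rw [pow_succ] at *
    nlinarith [mul_nonneg (mul_nonneg (by linarith : (0:ℝ) ≤ L0 β) hpow)
      (show (0:ℝ) ≤ 2 * β - 3 by nlinarith)]

lemma s2_lb {β : ℝ} (hroot : β ^ 4 - 2 * β ^ 3 + β - 1 = 0) (h₁ : 1.8 < β) (h₂ : β < 1.9)
    (m : ℕ) : L0 β / β ^ 10 * β ^ (m + 8) ≤ (s2 (m + 8) : ℝ) := by
  have hL0 := L0_pos h₁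
  have hβ0 : (0:ℝ) < β := by linarith
  have hf : (f2 (m + 8) : ℝ) = (cnt (m + 4) 3 : ℝ) := by
    have : f2 (m + 8) = cnt (m + 4) 3 := f2_eq (m + 4)
    rw [this]
  have h2 := Lw_le_cnt3 h₁ h₂ m
  rw [Lw_eq hroot] at h2
  have hfs : (f2 (m + 8) : ℝ) ≤ (s2 (m + 8) : ℝ) := by
    have : f2 (m + 8) ≤ s2 (m + 8) := by
      refine Finset.single_le_sum (f := fun i => f2 i) (fun i _ => Nat.zero_le _) ?_
      rw [Finset.mem_Icc]
      omega
    exact_mod_cast this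
  have key : L0 β / β ^ 10 * β ^ (m + 8) = L0 β * β ^ m / β ^ 2 := by
    rw [pow_add]
    field_simp
  rw [key]
  rw [div_le_iff₀ (by positivity)]
  calc L0 β * β ^ m ≤ β ^ 2 * (cnt (m + 4) 3 : ℝ) := h2
    _ = (cnt (m + 4) 3 : ℝ) * β ^ 2 := by ring
    _ ≤ (s2 (m + 8) : ℝ) * β ^ 2 := by
        apply mul_le_mul_of_nonneg_right _ (by positivity)
        rw [← hf]; exact hfs

lemma pow_rpow_inv {β : ℝ} (hβ : 0 ≤ β) {n : ℕ} (hn : n ≠ 0) :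
    ((β ^ n : ℝ)) ^ ((n : ℝ)⁻¹) = β := by
  rw [← Real.rpow_natCast β n, ← Real.rpow_mul hβ,
    mul_inv_cancel₀ (by exact_mod_cast hn), Real.rpow_one]

/-- asymptotic density of `D₂`: if `β` is the real root of
`β⁴ - 2β³ + β - 1 = 0` with `1.8 < β < 1.9` (numerically `β ≈ 1.867`), then
`(s_n)^{1/n} → β` as `n → ∞`. -/
theorem d2_asymptotic_density (β : ℝ)
    (hroot : β ^ 4 - 2 * β ^ 3 + β - 1 = 0) (h₁ : 1.8 < β) (h₂ : β < 1.9) :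
    Filter.Tendsto (fun n : ℕ => (s2 n : ℝ) ^ ((n : ℝ)⁻¹))
      Filter.atTop (nhds β) := by
  have hβ0 : (0:ℝ) < β := by linarith
  have hL0 := L0_pos h₁
  have hcpos : 0 < L0 β / β ^ 10 := div_pos (by linarith) (by positivity)
  have hCpos : (0:ℝ) < 3 * L0 β := by nlinarith
  have hinv : Filter.Tendsto (fun n : ℕ => ((n:ℝ))⁻¹) Filter.atTop (nhds 0) :=
    tendsto_inv_atTop_nhds_zero_nat
  have hgl : Filter.Tendsto (fun n : ℕ => (L0 β / β ^ 10) ^ ((n:ℝ)⁻¹) * β)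
      Filter.atTop (nhds β) := by
    have h := (Filter.Tendsto.rpow (tendsto_const_nhds (x := L0 β / β ^ 10)) hinv
      (Or.inl (ne_of_gt hcpos))).mul_const β
    rw [Real.rpow_zero, one_mul] at h
    exact h
  have hgu : Filter.Tendsto (fun n : ℕ => (3 * L0 β) ^ ((n:ℝ)⁻¹) * β)
      Filter.atTop (nhds β) := by
    have h := (Filter.Tendsto.rpow (tendsto_const_nhds (x := 3 * L0 β)) hinv
      (Or.inl (ne_of_gt hCpos))).mul_const β
    rw [Real.rpow_zero, one_mul] at h
    exact h
  refine tendsto_of_tendsto_of_tendsto_of_le_of_le' hgl hgu ?_ ?_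
  · filter_upwards [Filter.eventually_ge_atTop 8] with n hn
    obtain ⟨m, rfl⟩ : ∃ m, n = m + 8 := ⟨n - 8, by omega⟩
    have hb := s2_lb hroot h₁ h₂ m
    have hinvn : (0:ℝ) ≤ ((m + 8 : ℕ) : ℝ)⁻¹ := by positivity
    have heq : (L0 β / β ^ 10) ^ (((m + 8 : ℕ) : ℝ))⁻¹ * β
        = ((L0 β / β ^ 10) * β ^ (m + 8)) ^ (((m + 8 : ℕ) : ℝ))⁻¹ := by
      rw [Real.mul_rpow (le_of_lt hcpos) (by positivity),
        pow_rpow_inv (le_of_lt hβ0) (by omega : m + 8 ≠ 0)]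
    rw [heq]
    exact Real.rpow_le_rpow (by positivity) hb hinvn
  · filter_upwards [Filter.eventually_ge_atTop 8] with n hn
    have hb := s2_ub hroot h₁ n
    have hinvn : (0:ℝ) ≤ ((n : ℕ) : ℝ)⁻¹ := by positivity
    have heq : (3 * L0 β) ^ (((n : ℕ) : ℝ))⁻¹ * β
        = ((3 * L0 β) * β ^ n) ^ (((n : ℕ) : ℝ))⁻¹ := by
      rw [Real.mul_rpow (le_of_lt hCpos) (by positivity),
        pow_rpow_inv (le_of_lt hβ0) (by omega : n ≠ 0)]
    rw [heq]
    exact Real.rpow_le_rpow (by positivity) hb hinvn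
end

section
/- For every integer m ≥ 1 and every integer n ≥ 0, the number of codewords of the Fibonacci code Fib m having length m + n equals F^{(m)}_{n+1}, where F^{(m)} denotes the sequence of Fibonacci numbers of order m defined by F^{(m)}_1 = 1, F^{(m)}_j = 0 for −m < j ≤ 0, and F^{(m)}_j = F^{(m)}_{j−1} + F^{(m)}_{j−2} + … + F^{(m)}_{j−m} for j > 1. (For example, Fib 2 has exactly one codeword of length 2, one of length 3, two of length 4, three of length 5, five of length 6, etc.) -/
/-!
A codeword longer than `1^m` cannot consist of ones only, so it reads `1^k 0 w` with `k < m`,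
and `1^k 0 w` is a codeword exactly when `w` is one. This decomposition is unique, so the numbers
`c_L` of codewords of length `L` satisfy `c_(L+1) = c_L + ⋯ + c_(L-m+1)` for `L ≥ m`, with
`c_L = 0` for `L < m` and `c_m = 1`: the recurrence and initial values of `F^{(m)}_{L-m+1}`.
-/

/-- The Fibonacci code of order `m`: all binary words having `1^m` as a suffix and
containing `1^m` as a substring only in that suffix position (this includes the
word `1^m` itself). -/
def FibCode (m : ℕ) : Set (List Bool) :=
  {w | List.replicate m true <:+ w ∧
    ∀ u v, w = u ++ List.replicate m true ++ v → v = []}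

theorem eq_of_le_of_sum_range_recurrence {M : Type*} [AddCommMonoid M] {m : ℕ}
    {f g : ℕ → M} (hle : ∀ L ≤ m, f L = g L)
    (hf : ∀ L, m ≤ L → f (L + 1) = ∑ k ∈ Finset.range m, f (L - k))
    (hg : ∀ L, m ≤ L → g (L + 1) = ∑ k ∈ Finset.range m, g (L - k)) : f = g := by
  funext L
  induction L using Nat.strong_induction_on with
  | _ L ih =>
    rcases le_or_gt L m with hL | hL
    · exact hle L hL
    · obtain ⟨L, rfl⟩ := Nat.exists_eq_add_of_lt hL
      rw [hf _ (by omega), hg _ (by omega)]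
      exact Finset.sum_congr rfl fun k _ => ih _ (by omega)

section

open List

theorem replicate_true_append_ne_of_lt {j m : ℕ} (hj : j < m) (v w : List Bool) :
    replicate m true ++ v ≠ replicate j true ++ false :: w := by
  intro h
  have := congrArg (·[j]?) h
  simp [getElem?_append_left, hj] at this

theorem replicate_true_append_false_cons_inj {i j : ℕ} {a b : List Bool}
    (h : replicate i true ++ false :: a = replicate j true ++ false :: b) : i = j ∧ a = b := by
  induction i generalizing j with
  | zero => cases j <;> simp_all [replicate_succ]
  | succ i ih => cases j <;> simp_all [replicate_succ]

variable {m : ℕ}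

theorem le_length_of_mem_fibCode {w : List Bool} (hw : w ∈ FibCode m) : m ≤ w.length := by
  simpa using hw.1.length_le

theorem replicate_true_mem_fibCode_iff {L : ℕ} : replicate L true ∈ FibCode m ↔ L = m := by
  refine ⟨fun hw => ?_, ?_⟩
  · have hmL : m ≤ L := by simpa using le_length_of_mem_fibCode hw
    have hsplit : replicate L true = [] ++ replicate m true ++ replicate (L - m) true := by
      rw [nil_append, ← replicate_add, Nat.add_sub_cancel' hmL]
    have := hw.2 _ _ hsplit
    rw [replicate_eq_nil_iff] at this
    omega
  · rintro rfl
    refine ⟨suffix_refl _, fun u v h => ?_⟩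
    have := congrArg length h
    simp only [length_append, length_replicate] at this
    exact eq_nil_of_length_eq_zero (by omega)

theorem replicate_true_append_false_cons_mem_fibCode_iff {k : ℕ} {w : List Bool} :
    replicate k true ++ false :: w ∈ FibCode m ↔ k < m ∧ w ∈ FibCode m := by
  constructor
  · rintro ⟨hsuf, hocc⟩
    have hk : k < m := by
      by_contra! hmk
      have := hocc [] (replicate (k - m) true ++ false :: w) (by
        rw [nil_append, ← append_assoc, ← replicate_add, Nat.add_sub_cancel' hmk])
      simp at this
    refine ⟨hk, ?_, fun u v h => hocc (replicate k true ++ false :: u) v (by simp [h])⟩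
    have hfalse : false ∉ replicate m true := by simp
    rcases suffix_or_suffix_of_suffix hsuf (suffix_append _ (false :: w)) with h | h
    · rcases suffix_cons_iff.1 h with h | h
      · exact absurd (h ▸ mem_cons_self) hfalse
      · exact h
    · exact absurd (h.subset mem_cons_self) hfalse
  · rintro ⟨hk, hsuf, hocc⟩
    refine ⟨hsuf.trans (suffix_append_of_suffix (suffix_cons _ _)), fun u v h => ?_⟩
    rw [append_assoc] at h
    -- since `k < m`, an occurrence of `1^m` starting within `1^k 0` would cover the `0`
    rcases append_eq_append_iff.1 h with ⟨a, -, ha⟩ | ⟨c, hc, hc'⟩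
    · rcases a with _ | ⟨b, u'⟩
      · exact absurd ha.symm (by simpa using replicate_true_append_ne_of_lt (by omega : 0 < m) v w)
      · simp only [cons_append, cons.injEq] at ha
        exact hocc u' v (by simp [ha.2])
    · have hlen : c.length ≤ k := by
        have := congrArg length hc
        simp only [length_append, length_replicate] at this
        omega
      have hc : c = replicate c.length true :=
        eq_replicate_iff.2 ⟨rfl, fun b hb => eq_of_mem_replicate (hc ▸ mem_append_right u hb)⟩
      rw [hc] at hc'
      exact absurd hc' (replicate_true_append_ne_of_lt (by omega) v w)

theorem eq_replicate_true_or_exists_eq_replicate_true_append_false_cons (w : List Bool) :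
    w = replicate w.length true ∨ ∃ k w', w = replicate k true ++ false :: w' := by
  induction w with
  | nil => exact Or.inl rfl
  | cons b w ih =>
    cases b with
    | false => exact Or.inr ⟨0, w, rfl⟩
    | true =>
      rcases ih with h | ⟨k, w', h⟩
      · exact Or.inl (by rw [length_cons, replicate_succ, ← h])
      · exact Or.inr ⟨k + 1, w', by rw [h, replicate_succ, cons_append]⟩

theorem finite_setOf_mem_fibCode_length_eq (L : ℕ) : {w ∈ FibCode m | w.length = L}.Finite :=
  (List.finite_length_eq Bool L).subset fun _ hw => hw.2

theorem setOf_mem_fibCode_length_eq_of_lt {L : ℕ} (hL : L < m) :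
    {w ∈ FibCode m | w.length = L} = ∅ :=
  Set.eq_empty_of_forall_notMem fun _ ⟨hw, hlen⟩ =>
    (hlen ▸ hL).not_ge (le_length_of_mem_fibCode hw)

theorem setOf_mem_fibCode_length_self : {w ∈ FibCode m | w.length = m} = {replicate m true} := by
  ext w
  refine ⟨fun ⟨hw, hlen⟩ => ?_, ?_⟩
  · exact (hw.1.eq_of_length (by rw [length_replicate, hlen])).symm
  · rintro rfl
    exact ⟨replicate_true_mem_fibCode_iff.2 rfl, length_replicate⟩

theorem setOf_mem_fibCode_length_succ {L : ℕ} (hL : m ≤ L) :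
    {w ∈ FibCode m | w.length = L + 1} =
      ⋃ k ∈ Finset.range m,
        (fun w => replicate k true ++ false :: w) '' {w ∈ FibCode m | w.length = L - k} := by
  ext x
  simp only [Set.mem_iUnion, Set.mem_image, Finset.mem_range, exists_prop]
  constructor
  · rintro ⟨hx, hlen⟩
    obtain h | ⟨k, w, rfl⟩ :=
      eq_replicate_true_or_exists_eq_replicate_true_append_false_cons x
    · rw [h, replicate_true_mem_fibCode_iff] at hx
      omega
    · obtain ⟨hk, hw⟩ := replicate_true_append_false_cons_mem_fibCode_iff.1 hx
      simp only [length_append, length_replicate, length_cons] at hlen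
      exact ⟨k, hk, w, ⟨hw, by omega⟩, rfl⟩
  · rintro ⟨k, hk, w, ⟨hw, hlen⟩, rfl⟩
    refine ⟨replicate_true_append_false_cons_mem_fibCode_iff.2 ⟨hk, hw⟩, ?_⟩
    simp only [length_append, length_replicate, length_cons]
    omega

theorem ncard_setOf_mem_fibCode_length_succ {L : ℕ} (hL : m ≤ L) :
    {w ∈ FibCode m | w.length = L + 1}.ncard =
      ∑ k ∈ Finset.range m, {w ∈ FibCode m | w.length = L - k}.ncard := by
  rw [setOf_mem_fibCode_length_succ hL, ← Finset.set_biUnion_coe,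
    (Finset.range m).finite_toSet.ncard_biUnion
    (fun k _ => (finite_setOf_mem_fibCode_length_eq _).image _), finsum_mem_coe_finset]
  · refine Finset.sum_congr rfl fun k _ => Set.ncard_image_of_injective _ fun a b h => ?_
    exact (replicate_true_append_false_cons_inj h).2
  · refine fun i _ j _ hij => Set.disjoint_left.2 ?_
    rintro _ ⟨a, -, rfl⟩ ⟨b, -, hab⟩
    exact hij (replicate_true_append_false_cons_inj hab.symm).1

end

theorem fibCode_count_general (m : ℕ) (F : ℤ → ℕ)
    (hF1 : F 1 = 1)
    (hF0 : ∀ j : ℤ, -(m : ℤ) < j → j ≤ 0 → F j = 0)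
    (hFrec : ∀ j : ℤ, 1 < j → F j = ∑ i ∈ Finset.range m, F (j - 1 - (i : ℤ)))
    (n : ℕ) :
    Set.ncard {w ∈ FibCode m | w.length = m + n} = F ((n : ℤ) + 1) := by
  have key : (fun L => {w ∈ FibCode m | w.length = L}.ncard) =
      fun L : ℕ => F ((L : ℤ) - m + 1) := by
    refine eq_of_le_of_sum_range_recurrence (fun L hL => ?_)
      (fun L hL => ncard_setOf_mem_fibCode_length_succ hL) (fun L hL => ?_)
    · rcases hL.lt_or_eq with hL | rfl
      · rw [setOf_mem_fibCode_length_eq_of_lt hL, Set.ncard_empty, hF0 _ (by omega) (by omega)]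
      · rw [setOf_mem_fibCode_length_self, Set.ncard_singleton, sub_self, zero_add, hF1]
    · rw [hFrec _ (by omega)]
      refine Finset.sum_congr rfl fun k hk => congrArg F ?_
      rw [Finset.mem_range] at hk
      push_cast [show k ≤ L by omega]
      ring
  simpa using congrFun key (m + n)

/-- for every `m ≥ 1` and every `n ≥ 0`, the Fibonacci code `Fib m`
has exactly `F^{(m)}_{n+1}` codewords of length `m + n`, where `F^{(m)}` is the
sequence of Fibonacci numbers of order `m` given by `F^{(m)}_1 = 1`,
`F^{(m)}_j = 0` for `-m < j ≤ 0`, and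
`F^{(m)}_j = F^{(m)}_{j-1} + ⋯ + F^{(m)}_{j-m}` for `j > 1`. -/
theorem fibCode_count (m : ℕ) (hm : 1 ≤ m) (F : ℤ → ℕ)
    (hF1 : F 1 = 1)
    (hF0 : ∀ j : ℤ, -(m : ℤ) < j → j ≤ 0 → F j = 0)
    (hFrec : ∀ j : ℤ, 1 < j → F j = ∑ i ∈ Finset.range m, F (j - 1 - (i : ℤ)))
    (n : ℕ) :
    Set.ncard {w ∈ FibCode m | w.length = m + n} = F ((n : ℤ) + 1) :=
  fibCode_count_general m F hF1 hF0 hFrec n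
end
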